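/- Define f : ℝ³₊₊ → ℝ by f(x₁, x₂, x₃) = min(x₁, √(x₂·x₃)). For every p ∈ ℝ³₊₊ and every y > 0, every minimizer x ∈ ℝ³₊₊ of p₁x₁ + p₂x₂ + p₃x₃ subject to f(x) = y satisfies x₁ = y and x₂·x₃ = y² (i.e., lies on the curve defined by x₁ − y = 0 and x₂x₃ − y² = 0); moreover the minimizer is unique, namely x* = (y, y·√(p₃/p₂), y·√(p₂/p₃)). -/

import Mathlib

/-!
Every feasible `x` costs `p₀x₀ + (p₁x₁ + p₂x₂) ≥ p₀y + 2√(p₁p₂)·√(x₁x₂) ≥ p₀y + 2√(p₁p₂)·y`,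
using `x₀ ≥ y`, `√(x₁x₂) ≥ y` and AM–GM, and the point `x*` attains this bound. A minimizer
therefore makes all three inequalities equalities: `x₀ = y`, `x₁x₂ = y²` and, by the equality
case of AM–GM, `p₁x₁ = p₂x₂`; these equations have `x*` as their only positive solution.
-/

open Real

namespace Real

variable {a b : ℝ}

theorem add_sub_two_mul_sqrt_mul_eq_sq (ha : 0 ≤ a) (hb : 0 ≤ b) :
    a + b - 2 * √(a * b) = (√a - √b) ^ 2 := by
  rw [sqrt_mul ha, sub_sq, sq_sqrt ha, sq_sqrt hb]
  ring

theorem two_mul_sqrt_mul_le_add (ha : 0 ≤ a) (hb : 0 ≤ b) : 2 * √(a * b) ≤ a + b := by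
  linarith [add_sub_two_mul_sqrt_mul_eq_sq ha hb, sq_nonneg (√a - √b)]

theorem eq_of_add_eq_two_mul_sqrt_mul (ha : 0 ≤ a) (hb : 0 ≤ b) (h : a + b = 2 * √(a * b)) :
    a = b := by
  have hsq : (√a - √b) ^ 2 = 0 := by
    rw [← add_sub_two_mul_sqrt_mul_eq_sq ha hb, h, sub_self]
  rw [← sqrt_inj ha hb]
  linarith [pow_eq_zero_iff (n := 2) two_ne_zero |>.mp hsq]

theorem mul_sqrt_div_self (ha : 0 < a) : a * √(b / a) = √(a * b) := by
  rw [← sqrt_sq ha.le, ← sqrt_mul (sq_nonneg a), sqrt_sq ha.le]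
  congr 1
  field_simp

theorem sqrt_div_mul_sqrt_div (ha : 0 < a) (hb : 0 < b) : √(b / a) * √(a / b) = 1 := by
  rw [← sqrt_mul (div_pos hb ha).le, div_mul_div_comm, mul_comm b a,
    div_self (mul_pos ha hb).ne', sqrt_one]

end Real

theorem eq_mul_sqrt_div_of_mul_eq {a b u v k : ℝ} (ha : 0 < a) (hu : 0 < u)
    (hk : 0 < k) (hab : a * u = b * v) (huv : u * v = k ^ 2) : u = k * √(b / a) := by
  have hu2 : u ^ 2 = k ^ 2 * (b / a) := by
    field_simp
    linear_combination u * hab + b * huv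
  rw [← sqrt_sq hu.le, hu2, sqrt_mul (sq_nonneg k), sqrt_sq hk.le]

section Candidate

variable {p : Fin 3 → ℝ} (hp : ∀ i, 0 < p i) {y : ℝ} (hy : 0 < y)
include hp hy

theorem candidate_pos :
    ∀ i, 0 < ![y, y * √(p 2 / p 1), y * √(p 1 / p 2)] i := by
  have h1 : 0 < √(p 2 / p 1) := sqrt_pos.2 (div_pos (hp 2) (hp 1))
  have h2 : 0 < √(p 1 / p 2) := sqrt_pos.2 (div_pos (hp 1) (hp 2))
  intro i
  fin_cases i <;> simp <;> positivity

theorem candidate_output :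
    min y (√(y * √(p 2 / p 1) * (y * √(p 1 / p 2)))) = y := by
  rw [show y * √(p 2 / p 1) * (y * √(p 1 / p 2)) = y ^ 2 * (√(p 2 / p 1) * √(p 1 / p 2)) by ring,
    sqrt_div_mul_sqrt_div (hp 1) (hp 2), mul_one, sqrt_sq hy.le, min_self]

omit hy in
theorem candidate_cost :
    p 0 * y + p 1 * (y * √(p 2 / p 1)) + p 2 * (y * √(p 1 / p 2)) =
      p 0 * y + 2 * √(p 1 * p 2) * y := by
  have h1 := mul_sqrt_div_self (b := p 2) (hp 1)
  have h2 := mul_sqrt_div_self (b := p 1) (hp 2)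
  rw [mul_comm (p 2) (p 1)] at h2
  linear_combination y * h1 + y * h2

end Candidate

/-- **minimizers in the Blackorby–Russell example lie on the curve
`x₁ = y`, `x₂x₃ = y²`, and are unique.** For `f(x₁,x₂,x₃) = min(x₁, √(x₂ x₃))`,
positive prices `p` and output `y > 0`, every cost minimizer `x ∈ ℝ³₊₊` subject to
`f(x) = y` satisfies `x₁ = y` and `x₂ x₃ = y²`, and equals
`x* = (y, y √(p₃/p₂), y √(p₂/p₃))`. -/
theorem blackorby_russell_minimizer_unique (p : Fin 3 → ℝ) (hp : ∀ i, 0 < p i)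
    (y : ℝ) (hy : 0 < y) (x : Fin 3 → ℝ) (hx : ∀ i, 0 < x i)
    (hfx : min (x 0) (Real.sqrt (x 1 * x 2)) = y)
    (hmin : ∀ z : Fin 3 → ℝ, (∀ i, 0 < z i) →
      min (z 0) (Real.sqrt (z 1 * z 2)) = y →
      p 0 * x 0 + p 1 * x 1 + p 2 * x 2 ≤ p 0 * z 0 + p 1 * z 1 + p 2 * z 2) :
    x 0 = y ∧ x 1 * x 2 = y ^ 2 ∧
      x = ![y, y * Real.sqrt (p 2 / p 1), y * Real.sqrt (p 1 / p 2)] := by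
  have hopt : p 0 * x 0 + p 1 * x 1 + p 2 * x 2 ≤
      p 0 * y + p 1 * (y * √(p 2 / p 1)) + p 2 * (y * √(p 1 / p 2)) :=
    hmin _ (candidate_pos hp hy) (candidate_output hp hy)
  rw [candidate_cost hp] at hopt
  have hy0 : y ≤ x 0 := hfx ▸ min_le_left _ _
  have hy12 : y ≤ √(x 1 * x 2) := hfx ▸ min_le_right _ _
  have hu := (mul_pos (hp 1) (hx 1)).le
  have hv := (mul_pos (hp 2) (hx 2)).le
  have hgm : √(p 1 * x 1 * (p 2 * x 2)) = √(p 1 * p 2) * √(x 1 * x 2) := by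
    rw [← sqrt_mul (mul_pos (hp 1) (hp 2)).le]
    ring_nf
  have hamgm := two_mul_sqrt_mul_le_add hu hv
  have hc : √(p 1 * p 2) * y ≤ √(p 1 * p 2) * √(x 1 * x 2) :=
    mul_le_mul_of_nonneg_left hy12 (sqrt_nonneg _)
  have hx0 : x 0 = y := le_antisymm (le_of_mul_le_mul_left (by linarith) (hp 0)) hy0
  rw [hx0] at hopt
  have hs : √(x 1 * x 2) = y :=
    le_antisymm (le_of_mul_le_mul_left (by linarith) (sqrt_pos.2 (mul_pos (hp 1) (hp 2)))) hy12
  have hx12 : x 1 * x 2 = y ^ 2 := by rw [← hs, sq_sqrt (mul_pos (hx 1) (hx 2)).le]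
  rw [hs] at hgm
  have hbal : p 1 * x 1 = p 2 * x 2 := eq_of_add_eq_two_mul_sqrt_mul hu hv (by linarith)
  have hx1 := eq_mul_sqrt_div_of_mul_eq (hp 1) (hx 1) hy hbal hx12
  have hx2 := eq_mul_sqrt_div_of_mul_eq (hp 2) (hx 2) hy hbal.symm (by rw [mul_comm, hx12])
  refine ⟨hx0, hx12, ?_⟩
  ext i
  fin_cases i <;> simp [hx0, hx1, hx2]
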